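/- Let $\Omega = [a_1,b_1] \times [a_2,b_2] \subset \mathbb{R}^2$ be a closed rectangle with $a_1 < b_1$ and $a_2 < b_2$, and let $\alpha > 0$. Let $\mathbf{T} = (T_1, T_2) : \mathbb{R}^2 \to \mathbb{R}^2$ be $C^1$ on a neighborhood of $\Omega$, let $f_0, g_0 : \mathbb{R}^2 \to \mathbb{R}$ be continuous on $\Omega$, and set $P = J(\mathbf{T}) - f_0$ and $Q = \alpha(\operatorname{curl}(\mathbf{T}) - g_0)$, where $J(\mathbf{T}) = T_{1x}T_{2y} - T_{1y}T_{2x}$ and $\operatorname{curl}(\mathbf{T}) = T_{2x} - T_{1y}$. Define $\mathbf{a}_1 = -\big(P\, T_{2y},\; -P\, T_{2x} - Q\big)$ and $\mathbf{a}_2 = -\big(-P\, T_{1y} + Q,\; P\, T_{1x}\big)$, and assume $\mathbf{a}_1, \mathbf{a}_2$ are differentiable on the interior of $\Omega$ with integrable partial derivatives. Let $\mathbf{W} = (W_1, W_2)$, with each $W_i$ $C^1$ on $\Omega$, twice differentiable on the interior with integrable second partials, and $W_i = 0$ on $\partial\Omega$; set $h_i = \Delta W_i$. Let $g_1, g_2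 : \mathbb{R}^2 \to \mathbb{R}$ be $C^1$ on $\Omega$, twice differentiable on the interior with integrable second partials, with $g_i = 0$ on $\partial\Omega$ and $\Delta g_i = \nabla \cdot \mathbf{a}_i$ on the interior of $\Omega$ for $i=1,2$. Define $E(t) = \frac{1}{2}\iint_{\Omega}\big[(J(\mathbf{T}+t\mathbf{W})-f_0)^2 + \alpha(\operatorname{curl}(\mathbf{T}+t\mathbf{W})-g_0)^2\big]\,dA$. Then $E$ is differentiable at $t=0$ and $E'(0) = \iint_{\Omega} \big( g_1\, h_1 + g_2\, h_2 \big)\, dA$. -/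

import Mathlib

/-!
Both perturbed quantities are polynomial in `t`: `J(T + tW) = J(T) + t (J(T₁,W₂) + J(W₁,T₂)) +
t² J(W)` and `curl(T + tW) = curl T + t curl W`. So `E` is a sum of squared `L²` norms of
polynomial curves, and `E'(0) = ∬ (P δJ + Q δcurl)`, whose integrand is pointwise
`-(a₁ ⬝ ∇W₁ + a₂ ⬝ ∇W₂)`. The divergence theorem on the rectangle, with `Wᵢ = 0` on `∂Ω`, turns
`∬ aᵢ ⬝ ∇Wᵢ` into `-∬ (∇ ⬝ aᵢ) Wᵢ = -∬ Δgᵢ Wᵢ`, and Green's second identity (`gᵢ = Wᵢ = 0` on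
`∂Ω`) moves the Laplacian onto `Wᵢ`.

Functions that are only `C¹` up to `∂Ω` have `fderiv` partials that may be junk on `∂Ω`; as `∂Ω`
is Lebesgue-null, identities are only needed on the interior, and continuity up to the boundary
is recovered from `fderivWithin`.
-/

open MeasureTheory Set

/-- Partial derivative in the `x` direction of a function on `ℝ × ℝ`. -/
noncomputable def pdx (f : ℝ × ℝ → ℝ) : ℝ × ℝ → ℝ := fun p => fderiv ℝ f p (1, 0)

/-- Partial derivative in the `y` direction of a function on `ℝ × ℝ`. -/
noncomputable def pdy (f : ℝ × ℝ → ℝ) : ℝ × ℝ → ℝ := fun p => fderiv ℝ f p (0, 1)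

/-- Laplacian of a function on `ℝ × ℝ`. -/
noncomputable def lap (f : ℝ × ℝ → ℝ) : ℝ × ℝ → ℝ :=
  fun p => pdx (pdx f) p + pdy (pdy f) p

/-- Jacobian determinant of the map `S = (S₁, S₂) : ℝ² → ℝ²`:
`J(S) = S₁ₓ S₂_y - S₁_y S₂ₓ`. -/
noncomputable def Jdet (S₁ S₂ : ℝ × ℝ → ℝ) : ℝ × ℝ → ℝ :=
  fun p => pdx S₁ p * pdy S₂ p - pdy S₁ p * pdx S₂ p

/-- 2D scalar curl of the map `S = (S₁, S₂) : ℝ² → ℝ²`: `curl(S) = S₂ₓ - S₁_y`. -/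
noncomputable def curl2 (S₁ S₂ : ℝ × ℝ → ℝ) : ℝ × ℝ → ℝ :=
  fun p => pdx S₂ p - pdy S₁ p

/-- `P = J(T) - f₀`. -/
noncomputable def Pfun (T₁ T₂ f₀ : ℝ × ℝ → ℝ) : ℝ × ℝ → ℝ :=
  fun p => Jdet T₁ T₂ p - f₀ p

/-- `Q = α (curl T - g₀)`. -/
noncomputable def Qfun (α : ℝ) (T₁ T₂ g₀ : ℝ × ℝ → ℝ) : ℝ × ℝ → ℝ :=
  fun p => α * (curl2 T₁ T₂ p - g₀ p)

/-- First component of `a₁ = -(P T₂_y, -P T₂ₓ - Q)`. -/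
noncomputable def aa₁₁ (α : ℝ) (T₁ T₂ f₀ g₀ : ℝ × ℝ → ℝ) : ℝ × ℝ → ℝ :=
  fun p => -(Pfun T₁ T₂ f₀ p * pdy T₂ p)

/-- Second component of `a₁ = -(P T₂_y, -P T₂ₓ - Q)`. -/
noncomputable def aa₁₂ (α : ℝ) (T₁ T₂ f₀ g₀ : ℝ × ℝ → ℝ) : ℝ × ℝ → ℝ :=
  fun p => Pfun T₁ T₂ f₀ p * pdx T₂ p + Qfun α T₁ T₂ g₀ p

/-- First component of `a₂ = -(-P T₁_y + Q, P T₁ₓ)`. -/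
noncomputable def aa₂₁ (α : ℝ) (T₁ T₂ f₀ g₀ : ℝ × ℝ → ℝ) : ℝ × ℝ → ℝ :=
  fun p => Pfun T₁ T₂ f₀ p * pdy T₁ p - Qfun α T₁ T₂ g₀ p

/-- Second component of `a₂ = -(-P T₁_y + Q, P T₁ₓ)`. -/
noncomputable def aa₂₂ (α : ℝ) (T₁ T₂ f₀ g₀ : ℝ × ℝ → ℝ) : ℝ × ℝ → ℝ :=
  fun p => -(Pfun T₁ T₂ f₀ p * pdx T₁ p)

open Filter Topology

theorem ContinuousOn.memLp_top_of_isCompact {X : Type*} [TopologicalSpace X] [T2Space X]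
    [MeasurableSpace X] [OpensMeasurableSpace X] {F : Type*} [NormedAddCommGroup F]
    [SecondCountableTopologyEither X F] {μ : Measure X} {f : X → F} {K : Set X}
    (hf : ContinuousOn f K) (hK : IsCompact K) : MemLp f ⊤ (μ.restrict K) := by
  obtain ⟨C, hC⟩ := hK.exists_bound_of_continuousOn hf
  exact memLp_top_of_bound (hf.aestronglyMeasurable hK.measurableSet) C
    (ae_restrict_of_forall_mem hK.measurableSet hC)

section Calculus

variable {E F : Type*} [NormedAddCommGroup E] [NormedSpace ℝ E] [NormedAddCommGroup F]
  [NormedSpace ℝ F] {s : Set E}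

theorem fderivWithin_apply_eventuallyEq {f : E → F} {x : E} (hx : x ∈ interior s) (v : E) :
    (fun y => fderivWithin ℝ f s y v) =ᶠ[𝓝 x] fun y => fderiv ℝ f y v :=
  eventually_of_mem (isOpen_interior.mem_nhds hx) fun y hy => by
    simp only [fderivWithin_of_mem_nhds (mem_interior_iff_mem_nhds.1 hy)]

theorem fderiv_mul_apply {A W : E → ℝ} {p : E} (hA : DifferentiableAt ℝ A p)
    (hW : DifferentiableAt ℝ W p) (v : E) :
    fderiv ℝ (fun q => A q * W q) p v = fderiv ℝ A p v * W p + A p * fderiv ℝ W p v := by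
  rw [fderiv_fun_mul hA hW]
  simp only [add_apply, smul_apply, smul_eq_mul]
  ring

theorem fderiv_add_mul_apply {T W : E → ℝ} {p : E} (hT : DifferentiableAt ℝ T p)
    (hW : DifferentiableAt ℝ W p) (t : ℝ) (v : E) :
    fderiv ℝ (fun q => T q + t * W q) p v = fderiv ℝ T p v + t * fderiv ℝ W p v := by
  rw [fderiv_fun_add hT (hW.const_mul t), fderiv_const_mul hW]
  rfl

variable [FiniteDimensional ℝ E] [MeasurableSpace E] [BorelSpace E] {μ : Measure E}
  [μ.IsAddHaarMeasure]

theorem Convex.ae_restrict_mem_interior (hs : Convex ℝ s) :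
    ∀ᵐ x ∂μ.restrict s, x ∈ interior s := by
  rw [← Measure.restrict_congr_set (interior_ae_eq_of_null_frontier (hs.addHaar_frontier μ))]
  exact ae_restrict_mem measurableSet_interior

theorem ContDiffOn.memLp_top_fderiv_apply {f : E → F} (hf : ContDiffOn ℝ 1 f s)
    (hs : IsCompact s) (hsc : Convex ℝ s) (hsi : (interior s).Nonempty) (v : E) :
    MemLp (fun x => fderiv ℝ f x v) ⊤ (μ.restrict s) := by
  have hcont : ContinuousOn (fun x => fderivWithin ℝ f s x v) s :=
    (hf.continuousOn_fderivWithin (uniqueDiffOn_convex hsc hsi) le_rfl).clm_apply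
      continuousOn_const
  refine (hcont.memLp_top_of_isCompact hs).ae_eq ?_
  filter_upwards [hsc.ae_restrict_mem_interior] with x hx
  exact (fderivWithin_apply_eventuallyEq hx v).eq_of_nhds

theorem ContDiffOn.integrableOn_fderiv_apply {f : E → F} (hf : ContDiffOn ℝ 1 f s)
    (hs : IsCompact s) (hsc : Convex ℝ s) (hsi : (interior s).Nonempty) (v : E) :
    IntegrableOn (fun x => fderiv ℝ f x v) s μ := by
  have : IsFiniteMeasure (μ.restrict s) := isFiniteMeasure_restrict.2 hs.measure_lt_top.ne
  exact (hf.memLp_top_fderiv_apply hs hsc hsi v).integrable le_top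

end Calculus

theorem MeasureTheory.MemLp.norm_toLp_sq {X : Type*} [MeasurableSpace X] {μ : Measure X}
    {f : X → ℝ} (hf : MemLp f 2 μ) : ‖hf.toLp f‖ ^ 2 = ∫ x, f x ^ 2 ∂μ := by
  rw [← real_inner_self_eq_norm_sq, L2.inner_def]
  refine integral_congr_ae ?_
  filter_upwards [hf.coeFn_toLp] with x hx
  simp [hx, sq]

theorem MeasureTheory.MemLp.inner_toLp {X : Type*} [MeasurableSpace X] {μ : Measure X}
    {f g : X → ℝ} (hf : MemLp f 2 μ) (hg : MemLp g 2 μ) :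
    inner ℝ (hf.toLp f) (hg.toLp g) = ∫ x, f x * g x ∂μ := by
  rw [L2.inner_def]
  refine integral_congr_ae ?_
  filter_upwards [hf.coeFn_toLp, hg.coeFn_toLp] with x hx hy
  simp [hx, hy, mul_comm]

theorem hasDerivAt_integral_sq {X : Type*} [MeasurableSpace X] {μ : Measure X} {u v w : X → ℝ}
    (hu : MemLp u 2 μ) (hv : MemLp v 2 μ) (hw : MemLp w 2 μ) :
    HasDerivAt (fun t : ℝ => ∫ x, (u x + t * v x + t ^ 2 * w x) ^ 2 ∂μ)
      (2 * ∫ x, u x * v x ∂μ) 0 := by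
  -- the integral is `‖γ t‖²` for the curve `γ t = u + t • v + t² • w` in `L²`, and `γ' 0 = v`
  have hcurve : ∀ t : ℝ, MemLp (fun x => u x + t * v x + t ^ 2 * w x) 2 μ := fun t =>
    (hu.add (hv.const_mul t)).add (hw.const_mul (t ^ 2))
  have hnorm : ∀ t : ℝ, ‖hu.toLp u + t • hv.toLp v + t ^ 2 • hw.toLp w‖ ^ 2 =
      ∫ x, (u x + t * v x + t ^ 2 * w x) ^ 2 ∂μ := fun t => by
    rw [← (hcurve t).norm_toLp_sq,
      ← hv.toLp_const_smul, ← hw.toLp_const_smul, ← hu.toLp_add, ← MemLp.toLp_add]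
    rfl
  have hγ := (((hasDerivAt_id (0 : ℝ)).smul_const (hv.toLp v)).const_add (hu.toLp u)).add
    ((hasDerivAt_pow 2 (0 : ℝ)).smul_const (hw.toLp w))
  convert hγ.norm_sq using 1
  · funext t; exact (hnorm t).symm
  · simp [hu.inner_toLp hv]

theorem hasDerivAt_integral_sq_add_mul_sq {X : Type*} [MeasurableSpace X] {μ : Measure X}
    {u v w c d : X → ℝ} (hu : MemLp u 2 μ) (hv : MemLp v 2 μ) (hw : MemLp w 2 μ)
    (hc : MemLp c 2 μ) (hd : MemLp d 2 μ) (α : ℝ) :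
    HasDerivAt (fun t : ℝ => ∫ x, ((u x + t * v x + t ^ 2 * w x) ^ 2 + α * (c x + t * d x) ^ 2) ∂μ)
      (2 * ∫ x, (u x * v x + α * (c x * d x)) ∂μ) 0 := by
  have hsplit : ∀ t : ℝ,
      ∫ x, ((u x + t * v x + t ^ 2 * w x) ^ 2 + α * (c x + t * d x) ^ 2) ∂μ =
        (∫ x, (u x + t * v x + t ^ 2 * w x) ^ 2 ∂μ) +
          α * ∫ x, (c x + t * d x + t ^ 2 * 0) ^ 2 ∂μ := fun t => by
    have h₁ : Integrable (fun x => (u x + t * v x + t ^ 2 * w x) ^ 2) μ :=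
      ((hu.add (hv.const_mul t)).add (hw.const_mul (t ^ 2))).integrable_sq
    have h₂ : Integrable (fun x => α * (c x + t * d x) ^ 2) μ :=
      (hc.add (hd.const_mul t)).integrable_sq.const_mul α
    simp only [mul_zero, add_zero]
    rw [integral_add h₁ h₂, integral_const_mul]
  simp only [hsplit]
  refine ((hasDerivAt_integral_sq hu hv hw).add
    ((hasDerivAt_integral_sq hc hd (w := fun _ => 0) MemLp.zero).const_mul α)).congr_deriv ?_
  have h₁ : Integrable (fun x => u x * v x) μ := hu.integrable_mul hv
  have h₂ : Integrable (fun x => α * (c x * d x)) μ := (hc.integrable_mul hd).const_mul α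
  rw [integral_add h₁ h₂, integral_const_mul]
  ring

section PerturbedMap

variable {T₁ T₂ W₁ W₂ : ℝ × ℝ → ℝ} {p : ℝ × ℝ}

theorem Jdet_add_mul (hT₁ : DifferentiableAt ℝ T₁ p) (hT₂ : DifferentiableAt ℝ T₂ p)
    (hW₁ : DifferentiableAt ℝ W₁ p) (hW₂ : DifferentiableAt ℝ W₂ p) (t : ℝ) :
    Jdet (fun q => T₁ q + t * W₁ q) (fun q => T₂ q + t * W₂ q) p =
      Jdet T₁ T₂ p + t * (Jdet T₁ W₂ p + Jdet W₁ T₂ p) + t ^ 2 * Jdet W₁ W₂ p := by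
  simp only [Jdet, pdx, pdy, fderiv_add_mul_apply hT₁ hW₁, fderiv_add_mul_apply hT₂ hW₂]
  ring

theorem curl2_add_mul (hT₁ : DifferentiableAt ℝ T₁ p) (hT₂ : DifferentiableAt ℝ T₂ p)
    (hW₁ : DifferentiableAt ℝ W₁ p) (hW₂ : DifferentiableAt ℝ W₂ p) (t : ℝ) :
    curl2 (fun q => T₁ q + t * W₁ q) (fun q => T₂ q + t * W₂ q) p =
      curl2 T₁ T₂ p + t * curl2 W₁ W₂ p := by
  simp only [curl2, pdx, pdy, fderiv_add_mul_apply hT₁ hW₁, fderiv_add_mul_apply hT₂ hW₂]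
  ring

variable {μ : Measure (ℝ × ℝ)}

theorem memLp_top_Jdet (h₁ : ∀ v, MemLp (fun p => fderiv ℝ T₁ p v) ⊤ μ)
    (h₂ : ∀ v, MemLp (fun p => fderiv ℝ T₂ p v) ⊤ μ) : MemLp (Jdet T₁ T₂) ⊤ μ :=
  ((h₂ _).mul (h₁ _)).sub ((h₂ _).mul (h₁ _))

theorem memLp_top_curl2 (h₁ : ∀ v, MemLp (fun p => fderiv ℝ T₁ p v) ⊤ μ)
    (h₂ : ∀ v, MemLp (fun p => fderiv ℝ T₂ p v) ⊤ μ) : MemLp (curl2 T₁ T₂) ⊤ μ :=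
  (h₂ _).sub (h₁ _)

end PerturbedMap

theorem hasDerivAt_ssd_integral {s : Set (ℝ × ℝ)} (hs : IsCompact s) (hsc : Convex ℝ s)
    (hsi : (interior s).Nonempty) {α : ℝ} {T₁ T₂ f₀ g₀ W₁ W₂ : ℝ × ℝ → ℝ}
    (hT₁ : ContDiffOn ℝ 1 T₁ s) (hT₂ : ContDiffOn ℝ 1 T₂ s)
    (hf₀ : ContinuousOn f₀ s) (hg₀ : ContinuousOn g₀ s)
    (hW₁ : ContDiffOn ℝ 1 W₁ s) (hW₂ : ContDiffOn ℝ 1 W₂ s) :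
    HasDerivAt
      (fun t : ℝ =>
        (1 / 2) * ∫ p in s,
          ((Jdet (fun q => T₁ q + t * W₁ q) (fun q => T₂ q + t * W₂ q) p - f₀ p) ^ 2 +
            α * (curl2 (fun q => T₁ q + t * W₁ q) (fun q => T₂ q + t * W₂ q) p - g₀ p) ^ 2))
      (∫ p in s, (Pfun T₁ T₂ f₀ p * (Jdet T₁ W₂ p + Jdet W₁ T₂ p) +
        Qfun α T₁ T₂ g₀ p * curl2 W₁ W₂ p)) 0 := by
  have : IsFiniteMeasure (volume.restrict s) := isFiniteMeasure_restrict.2 hs.measure_lt_top.ne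
  have hL2 : ∀ {f : ℝ × ℝ → ℝ}, MemLp f ⊤ (volume.restrict s) → MemLp f 2 (volume.restrict s) :=
    fun hf => hf.mono_exponent le_top
  have hT₁' := hT₁.memLp_top_fderiv_apply (μ := volume) hs hsc hsi
  have hT₂' := hT₂.memLp_top_fderiv_apply (μ := volume) hs hsc hsi
  have hW₁' := hW₁.memLp_top_fderiv_apply (μ := volume) hs hsc hsi
  have hW₂' := hW₂.memLp_top_fderiv_apply (μ := volume) hs hsc hsi
  have hP : MemLp (Pfun T₁ T₂ f₀) 2 _ :=
    hL2 ((memLp_top_Jdet hT₁' hT₂').sub (hf₀.memLp_top_of_isCompact hs))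
  have hJ : MemLp (fun p => Jdet T₁ W₂ p + Jdet W₁ T₂ p) 2 _ :=
    hL2 ((memLp_top_Jdet hT₁' hW₂').add (memLp_top_Jdet hW₁' hT₂'))
  have hC : MemLp (fun p => curl2 T₁ T₂ p - g₀ p) 2 _ :=
    hL2 ((memLp_top_curl2 hT₁' hT₂').sub (hg₀.memLp_top_of_isCompact hs))
  have hE : ∀ t : ℝ, (∫ p in s,
      ((Jdet (fun q => T₁ q + t * W₁ q) (fun q => T₂ q + t * W₂ q) p - f₀ p) ^ 2 +
        α * (curl2 (fun q => T₁ q + t * W₁ q) (fun q => T₂ q + t * W₂ q) p - g₀ p) ^ 2)) =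
      ∫ p in s, ((Pfun T₁ T₂ f₀ p + t * (Jdet T₁ W₂ p + Jdet W₁ T₂ p) + t ^ 2 * Jdet W₁ W₂ p) ^ 2 +
        α * (curl2 T₁ T₂ p - g₀ p + t * curl2 W₁ W₂ p) ^ 2) := fun t => by
    refine integral_congr_ae ?_
    filter_upwards [hsc.ae_restrict_mem_interior] with p hp
    have hd : ∀ {f : ℝ × ℝ → ℝ}, ContDiffOn ℝ 1 f s → DifferentiableAt ℝ f p := fun hf =>
      (hf.differentiableOn one_ne_zero).differentiableAt (mem_interior_iff_mem_nhds.1 hp)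
    rw [Jdet_add_mul (hd hT₁) (hd hT₂) (hd hW₁) (hd hW₂),
      curl2_add_mul (hd hT₁) (hd hT₂) (hd hW₁) (hd hW₂), Pfun]
    ring
  simp only [hE]
  refine ((hasDerivAt_integral_sq_add_mul_sq hP hJ (hL2 (memLp_top_Jdet hW₁' hW₂')) hC
    (hL2 (memLp_top_curl2 hW₁' hW₂')) α).const_mul (1 / 2)).congr_deriv ?_
  simp only [Qfun, mul_assoc]
  ring

section Rectangle

variable {a₁ b₁ a₂ b₂ : ℝ}

theorem interior_Icc_prod_Icc :
    interior (Icc a₁ b₁ ×ˢ Icc a₂ b₂) = Ioo a₁ b₁ ×ˢ Ioo a₂ b₂ := by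
  rw [interior_prod_eq, interior_Icc, interior_Icc]

theorem isCompact_Icc_prod_Icc : IsCompact (Icc a₁ b₁ ×ˢ Icc a₂ b₂) :=
  isCompact_Icc.prod isCompact_Icc

theorem convex_Icc_prod_Icc : Convex ℝ (Icc a₁ b₁ ×ˢ Icc a₂ b₂) :=
  (convex_Icc a₁ b₁).prod (convex_Icc a₂ b₂)

theorem interior_Icc_prod_Icc_nonempty (h₁ : a₁ < b₁) (h₂ : a₂ < b₂) :
    (interior (Icc a₁ b₁ ×ˢ Icc a₂ b₂)).Nonempty :=
  interior_Icc_prod_Icc ▸ (nonempty_Ioo.2 h₁).prod (nonempty_Ioo.2 h₂)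

theorem integral_pdx_add_pdy_eq_zero (h₁ : a₁ ≤ b₁) (h₂ : a₂ ≤ b₂) {F G : ℝ × ℝ → ℝ}
    (hF : ContinuousOn F (Icc a₁ b₁ ×ˢ Icc a₂ b₂)) (hG : ContinuousOn G (Icc a₁ b₁ ×ˢ Icc a₂ b₂))
    (hFd : ∀ p ∈ interior (Icc a₁ b₁ ×ˢ Icc a₂ b₂), DifferentiableAt ℝ F p)
    (hGd : ∀ p ∈ interior (Icc a₁ b₁ ×ˢ Icc a₂ b₂), DifferentiableAt ℝ G p)
    (hi : IntegrableOn (fun p => pdx F p + pdy G p) (Icc a₁ b₁ ×ˢ Icc a₂ b₂))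
    (hF0 : ∀ p ∈ frontier (Icc a₁ b₁ ×ˢ Icc a₂ b₂), F p = 0)
    (hG0 : ∀ p ∈ frontier (Icc a₁ b₁ ×ˢ Icc a₂ b₂), G p = 0) :
    ∫ p in Icc a₁ b₁ ×ˢ Icc a₂ b₂, (pdx F p + pdy G p) = 0 := by
  have hedge : ∀ {φ : ℝ → ℝ} {c d : ℝ}, c ≤ d → (∀ x ∈ Icc c d, φ x = 0) →
      ∫ x in c..d, φ x = 0 := fun hcd hφ =>
    intervalIntegral.integral_zero_ae <| ae_of_all _ fun x hx =>
      hφ x (Ioc_subset_Icc_self (by rwa [uIoc_of_le hcd] at hx))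
  have hfr : ∀ p ∈ Icc a₁ b₁ ×ˢ Icc a₂ b₂, (p.1 = a₁ ∨ p.1 = b₁ ∨ p.2 = a₂ ∨ p.2 = b₂) →
      p ∈ frontier (Icc a₁ b₁ ×ˢ Icc a₂ b₂) := by
    rintro p hp hend
    rw [(isClosed_Icc.prod isClosed_Icc).frontier_eq, interior_Icc_prod_Icc]
    refine ⟨hp, fun ⟨⟨h₁, h₂⟩, h₃, h₄⟩ => ?_⟩
    rcases hend with h | h | h | h <;> linarith
  rw [interior_Icc_prod_Icc] at hFd hGd
  rw [Icc_prod_Icc] at hF hG hi ⊢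
  refine (integral_divergence_prod_Icc_of_hasFDerivAt_off_countable_of_le F G (fderiv ℝ F)
    (fderiv ℝ G) (a₁, a₂) (b₁, b₂) ⟨h₁, h₂⟩ ∅ countable_empty hF hG
    (fun p hp => (hFd p hp.1).hasFDerivAt) (fun p hp => (hGd p hp.1).hasFDerivAt) hi).trans ?_
  rw [hedge h₁ fun x hx => hG0 _ (hfr _ ⟨hx, right_mem_Icc.2 h₂⟩ (by simp)),
    hedge h₁ fun x hx => hG0 _ (hfr _ ⟨hx, left_mem_Icc.2 h₂⟩ (by simp)),
    hedge h₂ fun y hy => hF0 _ (hfr _ ⟨right_mem_Icc.2 h₁, hy⟩ (by simp)),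
    hedge h₂ fun y hy => hF0 _ (hfr _ ⟨left_mem_Icc.2 h₁, hy⟩ (by simp))]
  ring

theorem integrableOn_mul_pdx_add_mul_pdy (h₁ : a₁ < b₁) (h₂ : a₂ < b₂) {A B W : ℝ × ℝ → ℝ}
    (hA : ContinuousOn A (Icc a₁ b₁ ×ˢ Icc a₂ b₂)) (hB : ContinuousOn B (Icc a₁ b₁ ×ˢ Icc a₂ b₂))
    (hW : ContDiffOn ℝ 1 W (Icc a₁ b₁ ×ˢ Icc a₂ b₂)) :
    IntegrableOn (fun p => A p * pdx W p + B p * pdy W p) (Icc a₁ b₁ ×ˢ Icc a₂ b₂) :=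
  have hWv := hW.integrableOn_fderiv_apply isCompact_Icc_prod_Icc convex_Icc_prod_Icc
    (interior_Icc_prod_Icc_nonempty h₁ h₂)
  ((hWv _).continuousOn_mul hA isCompact_Icc_prod_Icc).add
    ((hWv _).continuousOn_mul hB isCompact_Icc_prod_Icc)

theorem integral_mul_pdx_add_mul_pdy_eq_neg (h₁ : a₁ < b₁) (h₂ : a₂ < b₂) {A B W : ℝ × ℝ → ℝ}
    (hA : ContinuousOn A (Icc a₁ b₁ ×ˢ Icc a₂ b₂)) (hB : ContinuousOn B (Icc a₁ b₁ ×ˢ Icc a₂ b₂))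
    (hAd : ∀ p ∈ interior (Icc a₁ b₁ ×ˢ Icc a₂ b₂), DifferentiableAt ℝ A p)
    (hBd : ∀ p ∈ interior (Icc a₁ b₁ ×ˢ Icc a₂ b₂), DifferentiableAt ℝ B p)
    (hAx : IntegrableOn (pdx A) (Icc a₁ b₁ ×ˢ Icc a₂ b₂))
    (hBy : IntegrableOn (pdy B) (Icc a₁ b₁ ×ˢ Icc a₂ b₂))
    (hW : ContDiffOn ℝ 1 W (Icc a₁ b₁ ×ˢ Icc a₂ b₂))
    (hW0 : ∀ p ∈ frontier (Icc a₁ b₁ ×ˢ Icc a₂ b₂), W p = 0) :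
    ∫ p in Icc a₁ b₁ ×ˢ Icc a₂ b₂, (A p * pdx W p + B p * pdy W p) =
      -∫ p in Icc a₁ b₁ ×ˢ Icc a₂ b₂, (pdx A p + pdy B p) * W p := by
  have hWd : ∀ p ∈ interior (Icc a₁ b₁ ×ˢ Icc a₂ b₂), DifferentiableAt ℝ W p := fun p hp =>
    (hW.differentiableOn one_ne_zero).differentiableAt (mem_interior_iff_mem_nhds.1 hp)
  have hL := integrableOn_mul_pdx_add_mul_pdy h₁ h₂ hA hB hW
  have hR : IntegrableOn (fun p => (pdx A p + pdy B p) * W p) (Icc a₁ b₁ ×ˢ Icc a₂ b₂) :=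
    (hAx.add hBy).mul_continuousOn hW.continuousOn isCompact_Icc_prod_Icc
  have hprod : (fun p => pdx (fun q => A q * W q) p + pdy (fun q => B q * W q) p)
      =ᵐ[volume.restrict (Icc a₁ b₁ ×ˢ Icc a₂ b₂)]
        fun p => (pdx A p + pdy B p) * W p + (A p * pdx W p + B p * pdy W p) := by
    filter_upwards [convex_Icc_prod_Icc.ae_restrict_mem_interior] with p hp
    simp only [pdx, pdy, fderiv_mul_apply (hAd p hp) (hWd p hp),
      fderiv_mul_apply (hBd p hp) (hWd p hp)]
    ring
  have hdiv := integral_pdx_add_pdy_eq_zero (F := fun q => A q * W q)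
    (G := fun q => B q * W q) h₁.le h₂.le (hA.mul hW.continuousOn)
    (hB.mul hW.continuousOn) (fun p hp => (hAd p hp).mul (hWd p hp))
    (fun p hp => (hBd p hp).mul (hWd p hp)) ((hR.add hL).congr hprod.symm)
    (fun p hp => by simp [hW0 p hp]) (fun p hp => by simp [hW0 p hp])
  rw [integral_congr_ae hprod, integral_add hR hL] at hdiv
  linarith

theorem integral_pdx_mul_pdx_add_pdy_mul_pdy (h₁ : a₁ < b₁) (h₂ : a₂ < b₂) {g W : ℝ × ℝ → ℝ}
    (hg : ContDiffOn ℝ 1 g (Icc a₁ b₁ ×ˢ Icc a₂ b₂))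
    (hg2 : ∀ p ∈ interior (Icc a₁ b₁ ×ˢ Icc a₂ b₂), DifferentiableAt ℝ (fderiv ℝ g) p)
    (hgxx : IntegrableOn (pdx (pdx g)) (Icc a₁ b₁ ×ˢ Icc a₂ b₂))
    (hgyy : IntegrableOn (pdy (pdy g)) (Icc a₁ b₁ ×ˢ Icc a₂ b₂))
    (hW : ContDiffOn ℝ 1 W (Icc a₁ b₁ ×ˢ Icc a₂ b₂))
    (hW0 : ∀ p ∈ frontier (Icc a₁ b₁ ×ˢ Icc a₂ b₂), W p = 0) :
    ∫ p in Icc a₁ b₁ ×ˢ Icc a₂ b₂, (pdx g p * pdx W p + pdy g p * pdy W p) =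
      -∫ p in Icc a₁ b₁ ×ˢ Icc a₂ b₂, lap g p * W p := by
  set Ω := Icc a₁ b₁ ×ˢ Icc a₂ b₂
  -- `pdx g` may be discontinuous at `∂Ω`, so integrate by parts against the within-derivatives
  have hcont : ∀ v, ContinuousOn (fun p => fderivWithin ℝ g Ω p v) Ω := fun v =>
    (hg.continuousOn_fderivWithin (uniqueDiffOn_convex convex_Icc_prod_Icc
      (interior_Icc_prod_Icc_nonempty h₁ h₂)) le_rfl).clm_apply continuousOn_const
  have heq : ∀ v, ∀ p ∈ interior Ω,
      (fun q => fderivWithin ℝ g Ω q v) =ᶠ[𝓝 p] fun q => fderiv ℝ g q v :=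
    fun v p hp => fderivWithin_apply_eventuallyEq hp v
  have hdiff : ∀ v, ∀ p ∈ interior Ω, DifferentiableAt ℝ (fun q => fderivWithin ℝ g Ω q v) p :=
    fun v p hp => (heq v p hp).differentiableAt_iff.2
      ((hg2 p hp).clm_apply (differentiableAt_const v))
  have hsecond : ∀ v w, (fun p => fderiv ℝ (fun q => fderivWithin ℝ g Ω q v) p w)
      =ᵐ[volume.restrict Ω] fun p => fderiv ℝ (fun q => fderiv ℝ g q v) p w := fun v w => by
    filter_upwards [convex_Icc_prod_Icc.ae_restrict_mem_interior] with p hp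
    rw [(heq v p hp).fderiv_eq]
  have hibp := integral_mul_pdx_add_mul_pdy_eq_neg h₁ h₂ (hcont (1, 0)) (hcont (0, 1))
    (hdiff _) (hdiff _) (hgxx.congr_fun_ae (hsecond _ _).symm)
    (hgyy.congr_fun_ae (hsecond _ _).symm) hW hW0
  refine (integral_congr_ae ?_).trans (hibp.trans (congrArg Neg.neg (integral_congr_ae ?_)))
  · filter_upwards [convex_Icc_prod_Icc.ae_restrict_mem_interior] with p hp
    have hx : pdx g p = fderivWithin ℝ g Ω p (1, 0) := ((heq _ p hp).eq_of_nhds).symm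
    have hy : pdy g p = fderivWithin ℝ g Ω p (0, 1) := ((heq _ p hp).eq_of_nhds).symm
    rw [hx, hy]
  · filter_upwards [hsecond (1, 0) (1, 0), hsecond (0, 1) (0, 1)] with p hx hy
    simp only [pdx, pdy, lap] at hx hy ⊢
    rw [hx, hy]
    rfl

theorem integral_lap_mul_eq_integral_mul_lap (h₁ : a₁ < b₁) (h₂ : a₂ < b₂) {g W : ℝ × ℝ → ℝ}
    (hg : ContDiffOn ℝ 1 g (Icc a₁ b₁ ×ˢ Icc a₂ b₂))
    (hg2 : ∀ p ∈ interior (Icc a₁ b₁ ×ˢ Icc a₂ b₂), DifferentiableAt ℝ (fderiv ℝ g) p)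
    (hgxx : IntegrableOn (pdx (pdx g)) (Icc a₁ b₁ ×ˢ Icc a₂ b₂))
    (hgyy : IntegrableOn (pdy (pdy g)) (Icc a₁ b₁ ×ˢ Icc a₂ b₂))
    (hg0 : ∀ p ∈ frontier (Icc a₁ b₁ ×ˢ Icc a₂ b₂), g p = 0)
    (hW : ContDiffOn ℝ 1 W (Icc a₁ b₁ ×ˢ Icc a₂ b₂))
    (hW2 : ∀ p ∈ interior (Icc a₁ b₁ ×ˢ Icc a₂ b₂), DifferentiableAt ℝ (fderiv ℝ W) p)
    (hWxx : IntegrableOn (pdx (pdx W)) (Icc a₁ b₁ ×ˢ Icc a₂ b₂))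
    (hWyy : IntegrableOn (pdy (pdy W)) (Icc a₁ b₁ ×ˢ Icc a₂ b₂))
    (hW0 : ∀ p ∈ frontier (Icc a₁ b₁ ×ˢ Icc a₂ b₂), W p = 0) :
    ∫ p in Icc a₁ b₁ ×ˢ Icc a₂ b₂, lap g p * W p =
      ∫ p in Icc a₁ b₁ ×ˢ Icc a₂ b₂, g p * lap W p := by
  have hgW := integral_pdx_mul_pdx_add_pdy_mul_pdy h₁ h₂ hg hg2 hgxx hgyy hW hW0
  have hWg := integral_pdx_mul_pdx_add_pdy_mul_pdy h₁ h₂ hW hW2 hWxx hWyy hg hg0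
  simp only [mul_comm (pdx W _), mul_comm (pdy W _), mul_comm (lap W _)] at hWg
  linarith

theorem integral_mul_pdx_add_mul_pdy_eq_neg_integral_mul_lap (h₁ : a₁ < b₁) (h₂ : a₂ < b₂)
    {A B g W : ℝ × ℝ → ℝ}
    (hA : ContinuousOn A (Icc a₁ b₁ ×ˢ Icc a₂ b₂)) (hB : ContinuousOn B (Icc a₁ b₁ ×ˢ Icc a₂ b₂))
    (hAd : ∀ p ∈ interior (Icc a₁ b₁ ×ˢ Icc a₂ b₂), DifferentiableAt ℝ A p)
    (hBd : ∀ p ∈ interior (Icc a₁ b₁ ×ˢ Icc a₂ b₂), DifferentiableAt ℝ B p)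
    (hAx : IntegrableOn (pdx A) (Icc a₁ b₁ ×ˢ Icc a₂ b₂))
    (hBy : IntegrableOn (pdy B) (Icc a₁ b₁ ×ˢ Icc a₂ b₂))
    (hg : ContDiffOn ℝ 1 g (Icc a₁ b₁ ×ˢ Icc a₂ b₂))
    (hg2 : ∀ p ∈ interior (Icc a₁ b₁ ×ˢ Icc a₂ b₂), DifferentiableAt ℝ (fderiv ℝ g) p)
    (hgxx : IntegrableOn (pdx (pdx g)) (Icc a₁ b₁ ×ˢ Icc a₂ b₂))
    (hgyy : IntegrableOn (pdy (pdy g)) (Icc a₁ b₁ ×ˢ Icc a₂ b₂))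
    (hg0 : ∀ p ∈ frontier (Icc a₁ b₁ ×ˢ Icc a₂ b₂), g p = 0)
    (hpois : ∀ p ∈ interior (Icc a₁ b₁ ×ˢ Icc a₂ b₂), lap g p = pdx A p + pdy B p)
    (hW : ContDiffOn ℝ 1 W (Icc a₁ b₁ ×ˢ Icc a₂ b₂))
    (hW2 : ∀ p ∈ interior (Icc a₁ b₁ ×ˢ Icc a₂ b₂), DifferentiableAt ℝ (fderiv ℝ W) p)
    (hWxx : IntegrableOn (pdx (pdx W)) (Icc a₁ b₁ ×ˢ Icc a₂ b₂))
    (hWyy : IntegrableOn (pdy (pdy W)) (Icc a₁ b₁ ×ˢ Icc a₂ b₂))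
    (hW0 : ∀ p ∈ frontier (Icc a₁ b₁ ×ˢ Icc a₂ b₂), W p = 0) :
    ∫ p in Icc a₁ b₁ ×ˢ Icc a₂ b₂, (A p * pdx W p + B p * pdy W p) =
      -∫ p in Icc a₁ b₁ ×ˢ Icc a₂ b₂, g p * lap W p := by
  have hdiv : ∫ p in Icc a₁ b₁ ×ˢ Icc a₂ b₂, (pdx A p + pdy B p) * W p =
      ∫ p in Icc a₁ b₁ ×ˢ Icc a₂ b₂, lap g p * W p := by
    refine integral_congr_ae ?_
    filter_upwards [convex_Icc_prod_Icc.ae_restrict_mem_interior] with p hp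
    rw [hpois p hp]
  rw [integral_mul_pdx_add_mul_pdy_eq_neg h₁ h₂ hA hB hAd hBd hAx hBy hW hW0, hdiv,
    integral_lap_mul_eq_integral_mul_lap h₁ h₂ hg hg2 hgxx hgyy hg0 hW hW2 hWxx hWyy hW0]

end Rectangle

theorem continuousOn_aa (α : ℝ) {s U : Set (ℝ × ℝ)} (hU : IsOpen U) (hsU : s ⊆ U)
    {T₁ T₂ f₀ g₀ : ℝ × ℝ → ℝ} (hT₁ : ContDiffOn ℝ 1 T₁ U) (hT₂ : ContDiffOn ℝ 1 T₂ U)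
    (hf₀ : ContinuousOn f₀ s) (hg₀ : ContinuousOn g₀ s) :
    ContinuousOn (aa₁₁ α T₁ T₂ f₀ g₀) s ∧ ContinuousOn (aa₁₂ α T₁ T₂ f₀ g₀) s ∧
      ContinuousOn (aa₂₁ α T₁ T₂ f₀ g₀) s ∧ ContinuousOn (aa₂₂ α T₁ T₂ f₀ g₀) s := by
  have hT : ∀ {T : ℝ × ℝ → ℝ}, ContDiffOn ℝ 1 T U → ∀ v,
      ContinuousOn (fun p => fderiv ℝ T p v) s := fun hT v =>
    ((hT.continuousOn_fderiv_of_isOpen hU le_rfl).clm_apply continuousOn_const).mono hsU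
  have hP : ContinuousOn (Pfun T₁ T₂ f₀) s :=
    (((hT hT₁ (1, 0)).mul (hT hT₂ (0, 1))).sub ((hT hT₁ (0, 1)).mul (hT hT₂ (1, 0)))).sub hf₀
  have hQ : ContinuousOn (Qfun α T₁ T₂ g₀) s :=
    continuousOn_const.mul (((hT hT₂ (1, 0)).sub (hT hT₁ (0, 1))).sub hg₀)
  exact ⟨(hP.mul (hT hT₂ (0, 1))).neg, (hP.mul (hT hT₂ (1, 0))).add hQ,
    (hP.mul (hT hT₁ (0, 1))).sub hQ, (hP.mul (hT hT₁ (1, 0))).neg⟩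

theorem Pfun_mul_add_Qfun_mul (α : ℝ) (T₁ T₂ f₀ g₀ W₁ W₂ : ℝ × ℝ → ℝ) (p : ℝ × ℝ) :
    Pfun T₁ T₂ f₀ p * (Jdet T₁ W₂ p + Jdet W₁ T₂ p) + Qfun α T₁ T₂ g₀ p * curl2 W₁ W₂ p =
      -((aa₁₁ α T₁ T₂ f₀ g₀ p * pdx W₁ p + aa₁₂ α T₁ T₂ f₀ g₀ p * pdy W₁ p) +
        (aa₂₁ α T₁ T₂ f₀ g₀ p * pdx W₂ p + aa₂₂ α T₁ T₂ f₀ g₀ p * pdy W₂ p)) := by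
  simp only [aa₁₁, aa₁₂, aa₂₁, aa₂₂, Jdet, curl2]
  ring

theorem ssd_gradient_general
    (a₁ b₁ a₂ b₂ α : ℝ) (hab₁ : a₁ < b₁) (hab₂ : a₂ < b₂)
    (T₁ T₂ f₀ g₀ W₁ W₂ g₁ g₂ : ℝ × ℝ → ℝ)
    (U : Set (ℝ × ℝ)) (hU : IsOpen U) (hΩU : Icc a₁ b₁ ×ˢ Icc a₂ b₂ ⊆ U)
    (hT₁ : ContDiffOn ℝ 1 T₁ U) (hT₂ : ContDiffOn ℝ 1 T₂ U)
    (hf₀ : ContinuousOn f₀ (Icc a₁ b₁ ×ˢ Icc a₂ b₂))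
    (hg₀ : ContinuousOn g₀ (Icc a₁ b₁ ×ˢ Icc a₂ b₂))
    -- the vector fields `a₁, a₂` are differentiable on the interior of `Ω`
    (hA₁₁d : ∀ p ∈ interior (Icc a₁ b₁ ×ˢ Icc a₂ b₂), DifferentiableAt ℝ (aa₁₁ α T₁ T₂ f₀ g₀) p)
    (hA₁₂d : ∀ p ∈ interior (Icc a₁ b₁ ×ˢ Icc a₂ b₂), DifferentiableAt ℝ (aa₁₂ α T₁ T₂ f₀ g₀) p)
    (hA₂₁d : ∀ p ∈ interior (Icc a₁ b₁ ×ˢ Icc a₂ b₂), DifferentiableAt ℝ (aa₂₁ α T₁ T₂ f₀ g₀) p)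
    (hA₂₂d : ∀ p ∈ interior (Icc a₁ b₁ ×ˢ Icc a₂ b₂), DifferentiableAt ℝ (aa₂₂ α T₁ T₂ f₀ g₀) p)
    -- with integrable partial derivatives
    (hiA₁₁x : IntegrableOn (pdx (aa₁₁ α T₁ T₂ f₀ g₀)) (Icc a₁ b₁ ×ˢ Icc a₂ b₂))
    (hiA₁₂y : IntegrableOn (pdy (aa₁₂ α T₁ T₂ f₀ g₀)) (Icc a₁ b₁ ×ˢ Icc a₂ b₂))
    (hiA₂₁x : IntegrableOn (pdx (aa₂₁ α T₁ T₂ f₀ g₀)) (Icc a₁ b₁ ×ˢ Icc a₂ b₂))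
    (hiA₂₂y : IntegrableOn (pdy (aa₂₂ α T₁ T₂ f₀ g₀)) (Icc a₁ b₁ ×ˢ Icc a₂ b₂))
    -- the perturbations `W₁, W₂`
    (hW₁ : ContDiffOn ℝ 1 W₁ (Icc a₁ b₁ ×ˢ Icc a₂ b₂))
    (hW₂ : ContDiffOn ℝ 1 W₂ (Icc a₁ b₁ ×ˢ Icc a₂ b₂))
    (hW₁d2 : ∀ p ∈ interior (Icc a₁ b₁ ×ˢ Icc a₂ b₂), DifferentiableAt ℝ (fderiv ℝ W₁) p)
    (hW₂d2 : ∀ p ∈ interior (Icc a₁ b₁ ×ˢ Icc a₂ b₂), DifferentiableAt ℝ (fderiv ℝ W₂) p)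
    (hiW₁xx : IntegrableOn (pdx (pdx W₁)) (Icc a₁ b₁ ×ˢ Icc a₂ b₂))
    (hiW₁yy : IntegrableOn (pdy (pdy W₁)) (Icc a₁ b₁ ×ˢ Icc a₂ b₂))
    (hiW₂xx : IntegrableOn (pdx (pdx W₂)) (Icc a₁ b₁ ×ˢ Icc a₂ b₂))
    (hiW₂yy : IntegrableOn (pdy (pdy W₂)) (Icc a₁ b₁ ×ˢ Icc a₂ b₂))
    (hW₁0 : ∀ p ∈ frontier (Icc a₁ b₁ ×ˢ Icc a₂ b₂), W₁ p = 0)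
    (hW₂0 : ∀ p ∈ frontier (Icc a₁ b₁ ×ˢ Icc a₂ b₂), W₂ p = 0)
    -- the adjoint variables `g₁, g₂`
    (hg₁ : ContDiffOn ℝ 1 g₁ (Icc a₁ b₁ ×ˢ Icc a₂ b₂))
    (hg₂ : ContDiffOn ℝ 1 g₂ (Icc a₁ b₁ ×ˢ Icc a₂ b₂))
    (hg₁d2 : ∀ p ∈ interior (Icc a₁ b₁ ×ˢ Icc a₂ b₂), DifferentiableAt ℝ (fderiv ℝ g₁) p)
    (hg₂d2 : ∀ p ∈ interior (Icc a₁ b₁ ×ˢ Icc a₂ b₂), DifferentiableAt ℝ (fderiv ℝ g₂) p)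
    (hig₁xx : IntegrableOn (pdx (pdx g₁)) (Icc a₁ b₁ ×ˢ Icc a₂ b₂))
    (hig₁yy : IntegrableOn (pdy (pdy g₁)) (Icc a₁ b₁ ×ˢ Icc a₂ b₂))
    (hig₂xx : IntegrableOn (pdx (pdx g₂)) (Icc a₁ b₁ ×ˢ Icc a₂ b₂))
    (hig₂yy : IntegrableOn (pdy (pdy g₂)) (Icc a₁ b₁ ×ˢ Icc a₂ b₂))
    (hg₁0 : ∀ p ∈ frontier (Icc a₁ b₁ ×ˢ Icc a₂ b₂), g₁ p = 0)
    (hg₂0 : ∀ p ∈ frontier (Icc a₁ b₁ ×ˢ Icc a₂ b₂), g₂ p = 0)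
    -- the adjoint Poisson equations `Δgᵢ = ∇ ⬝ aᵢ` in the interior of `Ω`
    (hpois₁ : ∀ p ∈ interior (Icc a₁ b₁ ×ˢ Icc a₂ b₂),
      lap g₁ p = pdx (aa₁₁ α T₁ T₂ f₀ g₀) p + pdy (aa₁₂ α T₁ T₂ f₀ g₀) p)
    (hpois₂ : ∀ p ∈ interior (Icc a₁ b₁ ×ˢ Icc a₂ b₂),
      lap g₂ p = pdx (aa₂₁ α T₁ T₂ f₀ g₀) p + pdy (aa₂₂ α T₁ T₂ f₀ g₀) p) :
    HasDerivAt
      (fun t : ℝ =>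
        (1 / 2) * ∫ p in Icc a₁ b₁ ×ˢ Icc a₂ b₂,
          ((Jdet (fun q => T₁ q + t * W₁ q) (fun q => T₂ q + t * W₂ q) p - f₀ p) ^ 2 +
            α * (curl2 (fun q => T₁ q + t * W₁ q) (fun q => T₂ q + t * W₂ q) p - g₀ p) ^ 2))
      (∫ p in Icc a₁ b₁ ×ˢ Icc a₂ b₂, (g₁ p * lap W₁ p + g₂ p * lap W₂ p))
      0 := by
  obtain ⟨hA₁₁, hA₁₂, hA₂₁, hA₂₂⟩ := continuousOn_aa α hU hΩU hT₁ hT₂ hf₀ hg₀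
  have h₁ := integral_mul_pdx_add_mul_pdy_eq_neg_integral_mul_lap hab₁ hab₂ hA₁₁ hA₁₂ hA₁₁d
    hA₁₂d hiA₁₁x hiA₁₂y hg₁ hg₁d2 hig₁xx hig₁yy hg₁0 hpois₁ hW₁ hW₁d2 hiW₁xx hiW₁yy hW₁0
  have h₂ := integral_mul_pdx_add_mul_pdy_eq_neg_integral_mul_lap hab₁ hab₂ hA₂₁ hA₂₂ hA₂₁d
    hA₂₂d hiA₂₁x hiA₂₂y hg₂ hg₂d2 hig₂xx hig₂yy hg₂0 hpois₂ hW₂ hW₂d2 hiW₂xx hiW₂yy hW₂0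
  have hG₁ : IntegrableOn (fun p => g₁ p * lap W₁ p) (Icc a₁ b₁ ×ˢ Icc a₂ b₂) :=
    (hiW₁xx.add hiW₁yy).continuousOn_mul hg₁.continuousOn isCompact_Icc_prod_Icc
  have hG₂ : IntegrableOn (fun p => g₂ p * lap W₂ p) (Icc a₁ b₁ ×ˢ Icc a₂ b₂) :=
    (hiW₂xx.add hiW₂yy).continuousOn_mul hg₂.continuousOn isCompact_Icc_prod_Icc
  refine (hasDerivAt_ssd_integral isCompact_Icc_prod_Icc convex_Icc_prod_Icc
    (interior_Icc_prod_Icc_nonempty hab₁ hab₂) (hT₁.mono hΩU) (hT₂.mono hΩU) hf₀ hg₀ hW₁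
    hW₂).congr_deriv ?_
  simp only [Pfun_mul_add_Qfun_mul]
  rw [integral_neg, integral_add (integrableOn_mul_pdx_add_mul_pdy hab₁ hab₂ hA₁₁ hA₁₂ hW₁)
    (integrableOn_mul_pdx_add_mul_pdy hab₁ hab₂ hA₂₁ hA₂₂ hW₂), h₁, h₂, integral_add hG₁ hG₂]
  ring

/-- **The gradient of the `ssd` functional (equation (8) of the paper).**
With `E(t) = ½ ∬_Ω [(J(T + tW) - f₀)² + α (curl(T + tW) - g₀)²] dA` on the closed rectangle
`Ω = [a₁,b₁] × [a₂,b₂]`, with the perturbations `Wᵢ` vanishing on `∂Ω` and `hᵢ = ΔWᵢ`, and with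
the adjoint variables `gᵢ` vanishing on `∂Ω` and solving `Δgᵢ = ∇ ⬝ aᵢ` in the interior (for
`a₁, a₂` of equation (6) adjusted for the weight `α`), `E` is differentiable at `t = 0` with
`E'(0) = ∬_Ω (g₁ h₁ + g₂ h₂) dA`. -/
theorem ssd_gradient
    (a₁ b₁ a₂ b₂ α : ℝ) (hab₁ : a₁ < b₁) (hab₂ : a₂ < b₂) (hα : 0 < α)
    (T₁ T₂ f₀ g₀ W₁ W₂ g₁ g₂ : ℝ × ℝ → ℝ)
    (U : Set (ℝ × ℝ)) (hU : IsOpen U) (hΩU : Icc a₁ b₁ ×ˢ Icc a₂ b₂ ⊆ U)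
    (hT₁ : ContDiffOn ℝ 1 T₁ U) (hT₂ : ContDiffOn ℝ 1 T₂ U)
    (hf₀ : ContinuousOn f₀ (Icc a₁ b₁ ×ˢ Icc a₂ b₂))
    (hg₀ : ContinuousOn g₀ (Icc a₁ b₁ ×ˢ Icc a₂ b₂))
    -- the vector fields `a₁, a₂` are differentiable on the interior of `Ω`
    (hA₁₁d : ∀ p ∈ interior (Icc a₁ b₁ ×ˢ Icc a₂ b₂), DifferentiableAt ℝ (aa₁₁ α T₁ T₂ f₀ g₀) p)
    (hA₁₂d : ∀ p ∈ interior (Icc a₁ b₁ ×ˢ Icc a₂ b₂), DifferentiableAt ℝ (aa₁₂ α T₁ T₂ f₀ g₀) p)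
    (hA₂₁d : ∀ p ∈ interior (Icc a₁ b₁ ×ˢ Icc a₂ b₂), DifferentiableAt ℝ (aa₂₁ α T₁ T₂ f₀ g₀) p)
    (hA₂₂d : ∀ p ∈ interior (Icc a₁ b₁ ×ˢ Icc a₂ b₂), DifferentiableAt ℝ (aa₂₂ α T₁ T₂ f₀ g₀) p)
    -- with integrable partial derivatives
    (hiA₁₁x : IntegrableOn (pdx (aa₁₁ α T₁ T₂ f₀ g₀)) (Icc a₁ b₁ ×ˢ Icc a₂ b₂))
    (hiA₁₁y : IntegrableOn (pdy (aa₁₁ α T₁ T₂ f₀ g₀)) (Icc a₁ b₁ ×ˢ Icc a₂ b₂))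
    (hiA₁₂x : IntegrableOn (pdx (aa₁₂ α T₁ T₂ f₀ g₀)) (Icc a₁ b₁ ×ˢ Icc a₂ b₂))
    (hiA₁₂y : IntegrableOn (pdy (aa₁₂ α T₁ T₂ f₀ g₀)) (Icc a₁ b₁ ×ˢ Icc a₂ b₂))
    (hiA₂₁x : IntegrableOn (pdx (aa₂₁ α T₁ T₂ f₀ g₀)) (Icc a₁ b₁ ×ˢ Icc a₂ b₂))
    (hiA₂₁y : IntegrableOn (pdy (aa₂₁ α T₁ T₂ f₀ g₀)) (Icc a₁ b₁ ×ˢ Icc a₂ b₂))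
    (hiA₂₂x : IntegrableOn (pdx (aa₂₂ α T₁ T₂ f₀ g₀)) (Icc a₁ b₁ ×ˢ Icc a₂ b₂))
    (hiA₂₂y : IntegrableOn (pdy (aa₂₂ α T₁ T₂ f₀ g₀)) (Icc a₁ b₁ ×ˢ Icc a₂ b₂))
    -- the perturbations `W₁, W₂`
    (hW₁ : ContDiffOn ℝ 1 W₁ (Icc a₁ b₁ ×ˢ Icc a₂ b₂))
    (hW₂ : ContDiffOn ℝ 1 W₂ (Icc a₁ b₁ ×ˢ Icc a₂ b₂))
    (hW₁d2 : ∀ p ∈ interior (Icc a₁ b₁ ×ˢ Icc a₂ b₂), DifferentiableAt ℝ (fderiv ℝ W₁) p)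
    (hW₂d2 : ∀ p ∈ interior (Icc a₁ b₁ ×ˢ Icc a₂ b₂), DifferentiableAt ℝ (fderiv ℝ W₂) p)
    (hiW₁xx : IntegrableOn (pdx (pdx W₁)) (Icc a₁ b₁ ×ˢ Icc a₂ b₂))
    (hiW₁xy : IntegrableOn (pdy (pdx W₁)) (Icc a₁ b₁ ×ˢ Icc a₂ b₂))
    (hiW₁yx : IntegrableOn (pdx (pdy W₁)) (Icc a₁ b₁ ×ˢ Icc a₂ b₂))
    (hiW₁yy : IntegrableOn (pdy (pdy W₁)) (Icc a₁ b₁ ×ˢ Icc a₂ b₂))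
    (hiW₂xx : IntegrableOn (pdx (pdx W₂)) (Icc a₁ b₁ ×ˢ Icc a₂ b₂))
    (hiW₂xy : IntegrableOn (pdy (pdx W₂)) (Icc a₁ b₁ ×ˢ Icc a₂ b₂))
    (hiW₂yx : IntegrableOn (pdx (pdy W₂)) (Icc a₁ b₁ ×ˢ Icc a₂ b₂))
    (hiW₂yy : IntegrableOn (pdy (pdy W₂)) (Icc a₁ b₁ ×ˢ Icc a₂ b₂))
    (hW₁0 : ∀ p ∈ frontier (Icc a₁ b₁ ×ˢ Icc a₂ b₂), W₁ p = 0)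
    (hW₂0 : ∀ p ∈ frontier (Icc a₁ b₁ ×ˢ Icc a₂ b₂), W₂ p = 0)
    -- the adjoint variables `g₁, g₂`
    (hg₁ : ContDiffOn ℝ 1 g₁ (Icc a₁ b₁ ×ˢ Icc a₂ b₂))
    (hg₂ : ContDiffOn ℝ 1 g₂ (Icc a₁ b₁ ×ˢ Icc a₂ b₂))
    (hg₁d2 : ∀ p ∈ interior (Icc a₁ b₁ ×ˢ Icc a₂ b₂), DifferentiableAt ℝ (fderiv ℝ g₁) p)
    (hg₂d2 : ∀ p ∈ interior (Icc a₁ b₁ ×ˢ Icc a₂ b₂), DifferentiableAt ℝ (fderiv ℝ g₂) p)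
    (hig₁xx : IntegrableOn (pdx (pdx g₁)) (Icc a₁ b₁ ×ˢ Icc a₂ b₂))
    (hig₁xy : IntegrableOn (pdy (pdx g₁)) (Icc a₁ b₁ ×ˢ Icc a₂ b₂))
    (hig₁yx : IntegrableOn (pdx (pdy g₁)) (Icc a₁ b₁ ×ˢ Icc a₂ b₂))
    (hig₁yy : IntegrableOn (pdy (pdy g₁)) (Icc a₁ b₁ ×ˢ Icc a₂ b₂))
    (hig₂xx : IntegrableOn (pdx (pdx g₂)) (Icc a₁ b₁ ×ˢ Icc a₂ b₂))
    (hig₂xy : IntegrableOn (pdy (pdx g₂)) (Icc a₁ b₁ ×ˢ Icc a₂ b₂))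
    (hig₂yx : IntegrableOn (pdx (pdy g₂)) (Icc a₁ b₁ ×ˢ Icc a₂ b₂))
    (hig₂yy : IntegrableOn (pdy (pdy g₂)) (Icc a₁ b₁ ×ˢ Icc a₂ b₂))
    (hg₁0 : ∀ p ∈ frontier (Icc a₁ b₁ ×ˢ Icc a₂ b₂), g₁ p = 0)
    (hg₂0 : ∀ p ∈ frontier (Icc a₁ b₁ ×ˢ Icc a₂ b₂), g₂ p = 0)
    -- the adjoint Poisson equations `Δgᵢ = ∇ ⬝ aᵢ` in the interior of `Ω`
    (hpois₁ : ∀ p ∈ interior (Icc a₁ b₁ ×ˢ Icc a₂ b₂),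
      lap g₁ p = pdx (aa₁₁ α T₁ T₂ f₀ g₀) p + pdy (aa₁₂ α T₁ T₂ f₀ g₀) p)
    (hpois₂ : ∀ p ∈ interior (Icc a₁ b₁ ×ˢ Icc a₂ b₂),
      lap g₂ p = pdx (aa₂₁ α T₁ T₂ f₀ g₀) p + pdy (aa₂₂ α T₁ T₂ f₀ g₀) p) :
    HasDerivAt
      (fun t : ℝ =>
        (1 / 2) * ∫ p in Icc a₁ b₁ ×ˢ Icc a₂ b₂,
          ((Jdet (fun q => T₁ q + t * W₁ q) (fun q => T₂ q + t * W₂ q) p - f₀ p) ^ 2 +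
            α * (curl2 (fun q => T₁ q + t * W₁ q) (fun q => T₂ q + t * W₂ q) p - g₀ p) ^ 2))
      (∫ p in Icc a₁ b₁ ×ˢ Icc a₂ b₂, (g₁ p * lap W₁ p + g₂ p * lap W₂ p))
      0 :=
  ssd_gradient_general a₁ b₁ a₂ b₂ α hab₁ hab₂ T₁ T₂ f₀ g₀ W₁ W₂ g₁ g₂ U hU hΩU hT₁ hT₂ hf₀ hg₀
    hA₁₁d hA₁₂d hA₂₁d hA₂₂d hiA₁₁x hiA₁₂y hiA₂₁x hiA₂₂y hW₁ hW₂ hW₁d2 hW₂d2 hiW₁xx hiW₁yy hiW₂xx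
    hiW₂yy hW₁0 hW₂0 hg₁ hg₂ hg₁d2 hg₂d2 hig₁xx hig₁yy hig₂xx hig₂yy hg₁0 hg₂0 hpois₁ hpois₂
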